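/- Let G₁ and G₂ be weighted graphs on n nodes each, with node weights 1/n (total weight 1) and arbitrary real edge weights. Then δ̂_□(G₁, G₂) ≤ n⁶ · δ_□(G₁, G₂), where δ̂_□ is the minimum labeled cut distance over bijections between the vertex sets and δ_□ is the cut distance over fractional overlays. -/

import Mathlib

/-- `X` is a fractional overlay (coupling) of the node weight distributions
`α` and `α'`. -/
def IsCoupling {n n' : ℕ} (α : Fin n → ℝ) (α' : Fin n' → ℝ)
    (X : Fin n → Fin n' → ℝ) : Prop :=
  (∀ i u, 0 ≤ X i u) ∧ (∀ i, ∑ u, X i u = α i) ∧ (∀ u, ∑ i, X i u = α' u)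

/-- The cut distance `d_□(G[X], G'[Xᵀ])` of the two overlaid graphs on
`[n]×[n']` determined by a fractional overlay `X`. -/
noncomputable def overlayDist {n n' : ℕ} (β : Fin n → Fin n → ℝ)
    (β' : Fin n' → Fin n' → ℝ) (X : Fin n → Fin n' → ℝ) : ℝ :=
  ⨆ S : Finset (Fin n × Fin n'), ⨆ T : Finset (Fin n × Fin n'),
    |∑ p ∈ S, ∑ q ∈ T, X p.1 p.2 * X q.1 q.2 * (β p.1 q.1 - β' p.2 q.2)|

/-- The cut distance `δ_□(G,G')` via fractional overlays. -/
noncomputable def deltaCut {n n' : ℕ} (α : Fin n → ℝ) (β : Fin n → Fin n → ℝ)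
    (α' : Fin n' → ℝ) (β' : Fin n' → Fin n' → ℝ) : ℝ :=
  sInf {r : ℝ | ∃ X : Fin n → Fin n' → ℝ, IsCoupling α α' X ∧
    r = overlayDist β β' X}

/-- The labeled cut distance of two edge weight matrices on `[n]`
(node weights `1/n`, total weight `1`). -/
noncomputable def dcut (n : ℕ) (A B : Fin n → Fin n → ℝ) : ℝ :=
  ⨆ S : Finset (Fin n), ⨆ T : Finset (Fin n),
    |∑ i ∈ S, ∑ j ∈ T, (A i j - B i j)| / (n : ℝ) ^ 2

/-- `δ̂_□(G₁,G₂)`: the minimum of the labeled cut distance over all bijections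
(overlays) between the two vertex sets. -/
noncomputable def deltaHat (n : ℕ) (β₁ β₂ : Fin n → Fin n → ℝ) : ℝ :=
  ⨅ π : Equiv.Perm (Fin n), dcut n β₁ (fun i j => β₂ (π i) (π j))

/-!
Given any fractional overlay `X` of the two uniform node distributions, Hall's marriage
theorem yields a bijection `π` with `X i (π i) ≥ 1/n³` for every `i`: a set `A` of rows whose
large entries (those `≥ 1/n³`) lie in fewer than `|A|` columns would carry mass `|A|/n`, of which
at most `(|A| - 1)/n` fits in those columns and less than `n² · 1/n³ = 1/n` in the rest.
Testing the cut norm of the overlay on the singletons `{(i, π i)}` and `{(j, π j)}` then bounds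
every entry `|β₁ i j - β₂ (π i) (π j)|` by `n⁶ · d_□(G₁[X], G₂[Xᵀ])`, and the labeled cut
distance is at most the largest entry.
-/

open Finset

section OverlayDist

variable {n n' : ℕ} (β : Fin n → Fin n → ℝ) (β' : Fin n' → Fin n' → ℝ) (X : Fin n → Fin n' → ℝ)

theorem overlayDist_nonneg : 0 ≤ overlayDist β β' X :=
  Real.iSup_nonneg fun _ => Real.iSup_nonneg fun _ => abs_nonneg _

theorem abs_sum_sum_le_overlayDist (S T : Finset (Fin n × Fin n')) :
    |∑ p ∈ S, ∑ q ∈ T, X p.1 p.2 * X q.1 q.2 * (β p.1 q.1 - β' p.2 q.2)| ≤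
      overlayDist β β' X :=
  (le_ciSup (f := fun T : Finset (Fin n × Fin n') =>
      |∑ p ∈ S, ∑ q ∈ T, X p.1 p.2 * X q.1 q.2 * (β p.1 q.1 - β' p.2 q.2)|)
      (Set.finite_range _).bddAbove T).trans
    (le_ciSup (f := fun S : Finset (Fin n × Fin n') => ⨆ T : Finset (Fin n × Fin n'),
      |∑ p ∈ S, ∑ q ∈ T, X p.1 p.2 * X q.1 q.2 * (β p.1 q.1 - β' p.2 q.2)|)
      (Set.finite_range _).bddAbove S)

theorem mul_mul_abs_sub_le_overlayDist {X : Fin n → Fin n' → ℝ} {i j : Fin n} {u v : Fin n'}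
    (hiu : 0 ≤ X i u) (hjv : 0 ≤ X j v) :
    X i u * X j v * |β i j - β' u v| ≤ overlayDist β β' X := by
  simpa [abs_mul, abs_of_nonneg hiu, abs_of_nonneg hjv] using
    abs_sum_sum_le_overlayDist β β' X {(i, u)} {(j, v)}

end OverlayDist

theorem dcut_nonneg (n : ℕ) (A B : Fin n → Fin n → ℝ) : 0 ≤ dcut n A B :=
  Real.iSup_nonneg fun _ => Real.iSup_nonneg fun _ => by positivity

theorem dcut_le_of_forall_abs_sub_le {n : ℕ} {A B : Fin n → Fin n → ℝ} {c : ℝ} (hc : 0 ≤ c)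
    (h : ∀ i j, |A i j - B i j| ≤ c) : dcut n A B ≤ c := by
  refine ciSup_le fun S => ciSup_le fun T => div_le_of_le_mul₀ (by positivity) hc ?_
  have hS : (#S : ℝ) ≤ n := by exact_mod_cast card_le_univ S |>.trans_eq (Fintype.card_fin n)
  have hT : (#T : ℝ) ≤ n := by exact_mod_cast card_le_univ T |>.trans_eq (Fintype.card_fin n)
  calc |∑ i ∈ S, ∑ j ∈ T, (A i j - B i j)|
      ≤ ∑ i ∈ S, ∑ j ∈ T, |A i j - B i j| :=
        (abs_sum_le_sum_abs _ _).trans (sum_le_sum fun i _ => abs_sum_le_sum_abs _ _)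
    _ ≤ ∑ i ∈ S, ∑ j ∈ T, c := sum_le_sum fun i _ => sum_le_sum fun j _ => h i j
    _ = #S * #T * c := by simp only [sum_const, nsmul_eq_mul]; ring
    _ ≤ n * n * c := by gcongr
    _ = c * (n : ℝ) ^ 2 := by ring

theorem deltaHat_le_dcut {n : ℕ} (β₁ β₂ : Fin n → Fin n → ℝ) (π : Equiv.Perm (Fin n)) :
    deltaHat n β₁ β₂ ≤ dcut n β₁ (fun i j => β₂ (π i) (π j)) :=
  ciInf_le ⟨0, Set.forall_mem_range.mpr fun _ => dcut_nonneg _ _ _⟩ π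

theorem isCoupling_const (n : ℕ) :
    IsCoupling (fun _ : Fin n => (1 : ℝ) / n) (fun _ : Fin n => (1 : ℝ) / n)
      (fun _ _ => 1 / (n : ℝ) ^ 2) := by
  refine ⟨fun _ _ => by positivity, fun i => ?_, fun u => ?_⟩ <;>
  · have : (n : ℝ) ≠ 0 := by have := Fin.pos ‹Fin n›; positivity
    simp only [sum_const, card_univ, Fintype.card_fin, nsmul_eq_mul]
    field_simp

namespace IsCoupling

variable {n : ℕ} {X : Fin n → Fin n → ℝ}
  (hX : IsCoupling (fun _ => (1 : ℝ) / n) (fun _ => (1 : ℝ) / n) X)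
include hX

theorem card_le_card_biUnion (A : Finset (Fin n)) :
    #A ≤ #(A.biUnion fun i => {u | 1 / (n : ℝ) ^ 3 ≤ X i u}) := by
  set B := A.biUnion fun i => {u | 1 / (n : ℝ) ^ 3 ≤ X i u}
  obtain rfl | hA := A.eq_empty_or_nonempty
  · simp
  obtain hB | hBc := Bᶜ.eq_empty_or_nonempty
  · simpa [(compl_eq_empty_iff B).mp hB] using card_le_univ A
  obtain ⟨hX_nonneg, hX_row, hX_col⟩ := hX
  have hn : (0 : ℝ) < n := by exact_mod_cast hA.choose.pos
  have hA_card : (#A : ℝ) ≤ n := by exact_mod_cast card_le_univ A |>.trans_eq (Fintype.card_fin n)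
  have hBc_card : (#Bᶜ : ℝ) ≤ n := by
    exact_mod_cast card_le_univ Bᶜ |>.trans_eq (Fintype.card_fin n)
  have hsplit : (#A : ℝ) / n = ∑ i ∈ A, ∑ u ∈ B, X i u + ∑ i ∈ A, ∑ u ∈ Bᶜ, X i u := by
    simp_rw [← sum_add_distrib, sum_add_sum_compl, hX_row, sum_const, nsmul_eq_mul]
    ring
  have hin : ∑ i ∈ A, ∑ u ∈ B, X i u ≤ #B / n :=
    calc ∑ i ∈ A, ∑ u ∈ B, X i u
        ≤ ∑ i, ∑ u ∈ B, X i u :=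
          sum_le_sum_of_subset_of_nonneg (subset_univ A) fun i _ _ =>
            sum_nonneg fun u _ => hX_nonneg i u
      _ = #B / n := by rw [sum_comm]; simp_rw [hX_col, sum_const, nsmul_eq_mul]; ring
  have hout : ∑ i ∈ A, ∑ u ∈ Bᶜ, X i u < 1 / n :=
    calc ∑ i ∈ A, ∑ u ∈ Bᶜ, X i u
        = ∑ p ∈ A ×ˢ Bᶜ, X p.1 p.2 := (sum_product A Bᶜ fun p => X p.1 p.2).symm
      _ < ∑ _p ∈ A ×ˢ Bᶜ, 1 / (n : ℝ) ^ 3 := by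
          refine sum_lt_sum_of_nonempty (hA.product hBc) fun p hp => ?_
          rw [mem_product, mem_compl, mem_biUnion] at hp
          exact not_le.mp fun h => hp.2 ⟨p.1, hp.1, mem_filter.mpr ⟨mem_univ _, h⟩⟩
      _ = #A * #Bᶜ / (n : ℝ) ^ 3 := by rw [sum_const, card_product]; ring
      _ ≤ n * n / (n : ℝ) ^ 3 := by gcongr
      _ = 1 / n := by field_simp
  have : (#A : ℝ) < #B + 1 := by
    have := hsplit.trans_lt (add_lt_add_of_le_of_lt hin hout)
    rwa [← add_div, div_lt_div_iff_of_pos_right hn] at this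
  exact_mod_cast Nat.lt_add_one_iff.mp (by exact_mod_cast this)

theorem exists_perm_le_apply : ∃ π : Equiv.Perm (Fin n), ∀ i, 1 / (n : ℝ) ^ 3 ≤ X i (π i) := by
  obtain ⟨f, hf_inj, hf⟩ :=
    (all_card_le_biUnion_card_iff_exists_injective _).mp hX.card_le_card_biUnion
  exact ⟨Equiv.ofBijective f (Finite.injective_iff_bijective.mp hf_inj),
    fun i => (mem_filter.mp (hf i)).2⟩

theorem deltaHat_le (β₁ β₂ : Fin n → Fin n → ℝ) :
    deltaHat n β₁ β₂ ≤ (n : ℝ) ^ 6 * overlayDist β₁ β₂ X := by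
  obtain ⟨π, hπ⟩ := hX.exists_perm_le_apply
  refine (deltaHat_le_dcut β₁ β₂ π).trans <|
    dcut_le_of_forall_abs_sub_le (by have := overlayDist_nonneg β₁ β₂ X; positivity) fun i j => ?_
  have hn : (0 : ℝ) < n := by exact_mod_cast i.pos
  have hpos : 0 < 1 / (n : ℝ) ^ 3 := by positivity
  have hX_pos : ∀ i, 0 ≤ X i (π i) := fun i => hpos.le.trans (hπ i)
  calc |β₁ i j - β₂ (π i) (π j)|
      = (n : ℝ) ^ 6 * (1 / (n : ℝ) ^ 3 * (1 / (n : ℝ) ^ 3) * |β₁ i j - β₂ (π i) (π j)|) := by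
        field_simp
    _ ≤ (n : ℝ) ^ 6 * (X i (π i) * X j (π j) * |β₁ i j - β₂ (π i) (π j)|) := by
        gcongr
        exacts [hX_pos i, hπ i, hπ j]
    _ ≤ (n : ℝ) ^ 6 * overlayDist β₁ β₂ X := by
        gcongr
        exact mul_mul_abs_sub_le_overlayDist β₁ β₂ (hX_pos i) (hX_pos j)

end IsCoupling

theorem deltaHat_le_pow_six_deltaCut_general (n : ℕ)
    (β₁ β₂ : Fin n → Fin n → ℝ) :
    deltaHat n β₁ β₂ ≤
      (n : ℝ) ^ 6 *
        deltaCut (fun _ => (1 : ℝ) / n) β₁ (fun _ => (1 : ℝ) / n) β₂ := by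
  have hne : {r : ℝ | ∃ X, IsCoupling (fun _ => (1 : ℝ) / n) (fun _ => (1 : ℝ) / n) X ∧
      r = overlayDist β₁ β₂ X}.Nonempty := ⟨_, _, isCoupling_const n, rfl⟩
  rw [deltaCut, ← smul_eq_mul, ← Real.sInf_smul_of_nonneg (by positivity)]
  refine le_csInf hne.smul_set ?_
  rintro _ ⟨_, ⟨X, hX, rfl⟩, rfl⟩
  exact hX.deltaHat_le β₁ β₂

/-- For weighted graphs `G₁, G₂` on `n` nodes with node weights `1/n`,
`δ̂_□(G₁,G₂) ≤ n⁶ · δ_□(G₁,G₂)`. -/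
theorem deltaHat_le_pow_six_deltaCut (n : ℕ) (hn : 0 < n)
    (β₁ β₂ : Fin n → Fin n → ℝ)
    (hβ₁ : ∀ i j, β₁ i j = β₁ j i) (hβ₂ : ∀ i j, β₂ i j = β₂ j i) :
    deltaHat n β₁ β₂ ≤
      (n : ℝ) ^ 6 *
        deltaCut (fun _ => (1 : ℝ) / n) β₁ (fun _ => (1 : ℝ) / n) β₂ :=
  deltaHat_le_pow_six_deltaCut_general n β₁ β₂
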